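/- arXiv:2203.06282 — 2 statements merged into one kernel-verified Lean document; each statement's English description precedes it below -/
import Mathlib

section
/- Let α₁, …, αₙ be nonzero vectors in ℚᵏ spanning ℚᵏ, and let V = ⊕ᵢ V(αᵢ) be the corresponding torus representation. The poset of T-invariant subspaces of the form V^H for closed connected subgroups H ⊆ T, ordered by inclusion, is order-isomorphic to the lattice of flats of the linear matroid (α₁, …, αₙ), via sending a flat A ⊆ [n] to the coordinate subspace ⊕_{i∈A} V(αᵢ). -/
open scoped Real

/-- A flat of the family of rational weight vectors `α`. -/
def IsFlat {k n : ℕ} (α : Fin n → (Fin k → ℚ)) (A : Set (Fin n)) : Prop :=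
  ∃ P : Submodule ℚ (Fin k → ℚ), A = {i | α i ∈ P}

/-- The coordinate subspace `⊕_{i ∈ A} V(αᵢ)` of `V = Fin n → ℂ`. -/
def coordSubspace {n : ℕ} (A : Set (Fin n)) : Set (Fin n → ℂ) :=
  {v | ∀ i : Fin n, i ∉ A → v i = 0}

/-- The `H`-fixed subspace `V^H` for the connected closed subgroup `H ⊆ T` with Lie
algebra `𝔥 ⊆ 𝔱 = ℝᵏ`: the set of vectors fixed by `exp ξ` for all `ξ ∈ 𝔥`, where
`ξ` acts on the `i`-th coordinate by multiplication by `exp(2πi⟨αᵢ, ξ⟩)`. -/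
def fixedSubspace {k n : ℕ} (α : Fin n → (Fin k → ℚ))
    (hLie : Submodule ℝ (Fin k → ℝ)) : Set (Fin n → ℂ) :=
  {v | ∀ ξ ∈ hLie, ∀ i : Fin n,
    Complex.exp (2 * π * Complex.I * ∑ j, (α i j : ℂ) * (ξ j : ℂ)) * v i = v i}

lemma sum_mul_const {k : ℕ} (a : Fin k → ℚ) (ξ : Fin k → ℝ) (c : ℝ) :
    ∑ j, (a j : ℝ) * (c * ξ j) = c * ∑ j, (a j : ℝ) * ξ j := by
  rw [Finset.mul_sum]; exact Finset.sum_congr rfl fun j _ => by ring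

lemma sum_cast_eq {k : ℕ} (a : Fin k → ℚ) (ξ : Fin k → ℝ) :
    (∑ j, (a j : ℂ) * (ξ j : ℂ)) = ((∑ j, (a j : ℝ) * ξ j : ℝ) : ℂ) := by
  push_cast; ring_nf

/-- Real annihilator of a rational subspace. -/
def annihR {k : ℕ} (P : Submodule ℚ (Fin k → ℚ)) : Submodule ℝ (Fin k → ℝ) where
  carrier := {ξ | ∀ x ∈ P, ∑ j, (x j : ℝ) * ξ j = 0}
  add_mem' := by
    intro a b ha hb x hx
    simp only [Set.mem_setOf_eq] at *
    simp only [Pi.add_apply, mul_add, Finset.sum_add_distrib, ha x hx, hb x hx, add_zero]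
  zero_mem' := by intro x hx; simp
  smul_mem' := by
    intro c a ha x hx
    simp only [Set.mem_setOf_eq] at *
    simp only [Pi.smul_apply, smul_eq_mul]
    rw [sum_mul_const, ha x hx, mul_zero]

lemma mem_annihR {k : ℕ} (P : Submodule ℚ (Fin k → ℚ)) (ξ : Fin k → ℝ) :
    ξ ∈ annihR P ↔ ∀ x ∈ P, ∑ j, (x j : ℝ) * ξ j = 0 := Iff.rfl

/-- Rational annihilator of a real subspace. -/
def perpQ {k : ℕ} (hLie : Submodule ℝ (Fin k → ℝ)) : Submodule ℚ (Fin k → ℚ) where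
  carrier := {x | ∀ ξ ∈ hLie, ∑ j, (x j : ℝ) * ξ j = 0}
  add_mem' := by
    intro a b ha hb ξ hξ
    simp only [Set.mem_setOf_eq] at *
    simp only [Pi.add_apply]
    push_cast
    simp only [add_mul, Finset.sum_add_distrib, ha ξ hξ, hb ξ hξ, add_zero]
  zero_mem' := by intro ξ hξ; simp
  smul_mem' := by
    intro c a ha ξ hξ
    simp only [Set.mem_setOf_eq] at *
    simp only [Pi.smul_apply, smul_eq_mul]
    push_cast
    have : ∑ j, (c : ℝ) * (a j : ℝ) * ξ j = (c : ℝ) * ∑ j, (a j : ℝ) * ξ j := by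
      rw [Finset.mul_sum]; exact Finset.sum_congr rfl fun j _ => by ring
    rw [this, ha ξ hξ, mul_zero]

lemma mem_perpQ {k : ℕ} (hLie : Submodule ℝ (Fin k → ℝ)) (x : Fin k → ℚ) :
    x ∈ perpQ hLie ↔ ∀ ξ ∈ hLie, ∑ j, (x j : ℝ) * ξ j = 0 := Iff.rfl

lemma fixed_eq_coord {k n : ℕ} (α : Fin n → (Fin k → ℚ))
    (hLie : Submodule ℝ (Fin k → ℝ)) :
    fixedSubspace α hLie =
      coordSubspace {i | ∀ ξ ∈ hLie, ∑ j, (α i j : ℝ) * ξ j = 0} := by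
  ext v
  constructor
  · intro hv i hi
    simp only [Set.mem_setOf_eq, not_forall] at hi
    obtain ⟨ξ, hξ, ht⟩ := hi
    set t : ℝ := ∑ j, (α i j : ℝ) * ξ j with htdef
    have hmem : (1 / (2 * t)) • ξ ∈ hLie := hLie.smul_mem _ hξ
    have h1 := hv _ hmem i
    rw [sum_cast_eq] at h1
    have hsum : (∑ j, (α i j : ℝ) * ((1 / (2 * t)) • ξ) j : ℝ) = 1 / 2 := by
      simp only [Pi.smul_apply, smul_eq_mul]
      rw [sum_mul_const, ← htdef]
      field_simp
    rw [hsum] at h1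
    have h2 : Complex.exp (π * Complex.I) * v i = v i := by
      convert h1 using 3
      push_cast; ring
    rw [Complex.exp_pi_mul_I] at h2
    have h3 : (2 : ℂ) * v i = 0 := by linear_combination -h2
    simpa using h3
  · intro hv ξ hξ i
    by_cases hi : ∀ ξ ∈ hLie, ∑ j, (α i j : ℝ) * ξ j = 0
    · rw [sum_cast_eq, hi ξ hξ]
      simp
    · rw [hv i hi, mul_zero]

/-- For nonzero weights `α₁, …, αₙ` spanning `ℚᵏ`, the poset of fixed subspaces
`V^H` (for connected closed subgroups `H`, i.e. Lie subalgebras `𝔥`), ordered by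
inclusion, is order-isomorphic to the lattice of flats of the matroid `α`, via
sending a flat `A` to the coordinate subspace `⊕_{i∈A} V(αᵢ)`: the correspondence
is order-preserving and order-reflecting, every coordinate subspace of a flat is a
fixed subspace, and every fixed subspace arises from a unique flat. -/
theorem flats_orderIso_fixedSubspaces {k n : ℕ} (α : Fin n → (Fin k → ℚ))
    (hα : ∀ i, α i ≠ 0) (hspan : Submodule.span ℚ (Set.range α) = ⊤) :
    (∀ A B : Set (Fin n), IsFlat α A → IsFlat α B →
      (coordSubspace A ⊆ coordSubspace B ↔ A ⊆ B)) ∧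
    (∀ A : Set (Fin n), IsFlat α A →
      ∃ hLie : Submodule ℝ (Fin k → ℝ), coordSubspace A = fixedSubspace α hLie) ∧
    (∀ hLie : Submodule ℝ (Fin k → ℝ),
      ∃ A : Set (Fin n), IsFlat α A ∧ fixedSubspace α hLie = coordSubspace A) := by
  refine ⟨?_, ?_, ?_⟩
  · intro A B _ _
    constructor
    · intro h i hiA
      by_contra hiB
      have hmem : (Pi.single i (1:ℂ)) ∈ coordSubspace A := by
        intro j hj
        have hji : j ≠ i := fun h' => hj (by rw [h']; exact hiA)
        exact Pi.single_eq_of_ne hji 1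
      have := h hmem i hiB
      simp at this
    · intro h v hv i hi
      exact hv i (fun hiA => hi (h hiA))
  · rintro A ⟨P, rfl⟩
    refine ⟨annihR P, ?_⟩
    rw [fixed_eq_coord]
    have hset : {i | α i ∈ P} = {i | ∀ ξ ∈ annihR P, ∑ j, (α i j : ℝ) * ξ j = 0} := by
      ext i
      simp only [Set.mem_setOf_eq]
      constructor
      · intro hi ξ hξ
        exact (mem_annihR P ξ).mp hξ (α i) hi
      · intro hi
        by_contra hP
        obtain ⟨f, hf1, hf2⟩ := Submodule.exists_dual_map_eq_bot_of_notMem hP inferInstance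
        set ξ : Fin k → ℝ := fun j => ((f (Pi.single j 1) : ℚ) : ℝ) with hξdef
        have key : ∀ x : Fin k → ℚ, ∑ j, (x j : ℝ) * ξ j = ((f x : ℚ) : ℝ) := by
          intro x
          have hx : x = ∑ j, x j • (Pi.single j 1 : Fin k → ℚ) := by
            ext j'; simp [Pi.single_apply, Finset.sum_apply]
          conv_rhs => rw [hx]
          rw [map_sum]
          push_cast
          refine Finset.sum_congr rfl fun j _ => ?_
          rw [map_smul, smul_eq_mul, hξdef]
          push_cast
          ring
        have hξmem : ξ ∈ annihR P := by
          rw [mem_annihR]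
          intro x hx
          rw [key]
          have hfx : f x = 0 := by
            have : f x ∈ P.map f := Submodule.mem_map_of_mem hx
            rwa [hf2, Submodule.mem_bot] at this
          rw [hfx]; norm_num
        have := hi ξ hξmem
        rw [key] at this
        exact hf1 (by exact_mod_cast this)
    rw [hset]
  · intro hLie
    exact ⟨{i | ∀ ξ ∈ hLie, ∑ j, (α i j : ℝ) * ξ j = 0},
      ⟨perpQ hLie, rfl⟩, fixed_eq_coord α hLie⟩
end

section
/- In a geometric lattice L of rank k, the Möbius function values μ(0̂, s) alternate in sign: (−1)^{rk(s)} μ(0̂, s) > 0 for every s ∈ L. -/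
/-- A finite partial order with rank function `rk` is a geometric lattice if it is a
finite lattice (all pairs have meets and joins), bounded, graded by `rk` (with
`rk ⊥ = 0` and covers raising rank by one), atomistic (every element is the least
upper bound of the rank-one elements below it), and semimodular
(`rk (a ⊔ b) + rk (a ⊓ b) ≤ rk a + rk b`). -/
def IsGeometricLattice {α : Type*} [PartialOrder α] (rk : α → ℕ) : Prop :=
  Finite α ∧
  (∃ bot : α, IsBot bot ∧ rk bot = 0) ∧
  (∃ top : α, IsTop top) ∧
  (∀ a b : α, a ⋖ b → rk b = rk a + 1) ∧
  (∀ a b : α, ∃ m, IsGLB {a, b} m) ∧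
  (∀ a b : α, ∃ j, IsLUB {a, b} j) ∧
  (∀ x : α, IsLUB {a | rk a = 1 ∧ a ≤ x} x) ∧
  (∀ a b m j : α, IsGLB {a, b} m → IsLUB {a, b} j → rk j + rk m ≤ rk a + rk b)

open scoped BigOperators

/-!
By Weisner's theorem, for an atom `a ≤ s` one has `μ(0̂, s) = -∑ μ(0̂, x)` over the `x ≠ s`
with `x ⊔ a = s`. By semimodularity each such `x` has rank `rk s - 1`, and by atomisticity there
is one (a maximal `x ≤ s` with `a ≰ x`), so the signs alternate by induction on `s`.
-/

open Finset

theorem strictMono_of_covBy_imp_rk_eq_add_one {α : Type*} [PartialOrder α] [Finite α]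
    {rk : α → ℕ} (hcov : ∀ a b : α, a ⋖ b → rk b = rk a + 1) : StrictMono rk := by
  intro x y hxy
  induction y using WellFoundedLT.induction with
  | _ y ih =>
    obtain ⟨z, hxz, hzy⟩ := exists_le_covBy_of_lt hxy
    rw [hcov z y hzy, Nat.lt_succ_iff]
    rcases hxz.eq_or_lt with rfl | hxz
    · rfl
    · exact (ih z hzy.lt hxz).le

/-- Weisner's theorem. -/
theorem sum_filter_sup_eq_eq_zero {α M : Type*} [Lattice α] [OrderBot α] [Fintype α]
    [DecidableEq α] [DecidableLE α] [AddCommMonoid M] (f : α → M)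
    (hf : ∀ y, ⊥ < y → ∑ x with x ≤ y, f x = 0) {a : α} (ha : ⊥ < a) {y : α} (hay : a ≤ y) :
    ∑ x with x ⊔ a = y, f x = 0 := by
  induction y using WellFoundedLT.induction with
  | _ y ih =>
    -- group the `x ≤ y` by `x ⊔ a`: the fibres over `z < y` vanish by induction
    have hfibers := sum_fiberwise_eq_sum_filter univ {z | a ≤ z ∧ z ≤ y} (· ⊔ a) f
    have hlower : ∀ x, a ≤ x ⊔ a ∧ x ⊔ a ≤ y ↔ x ≤ y := fun x =>
      ⟨fun h => le_sup_left.trans h.2, fun h => ⟨le_sup_right, sup_le h hay⟩⟩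
    simp only [mem_filter, mem_univ, true_and, hlower, hf y (ha.trans_le hay)] at hfibers
    rwa [sum_eq_single_of_mem y (by simp [hay]) fun z hz hzy => by
      simp only [mem_filter, mem_univ, true_and] at hz
      exact ih z (hz.2.lt_of_ne hzy) hz.1] at hfibers

section GeometricLattice

variable {α : Type*} [Lattice α] {rk : α → ℕ}

theorem exists_rk_eq_one_le_not_le (hatom : ∀ x : α, IsLUB {a | rk a = 1 ∧ a ≤ x} x)
    {s x : α} (hsx : ¬ s ≤ x) : ∃ b, rk b = 1 ∧ b ≤ s ∧ ¬ b ≤ x := by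
  by_contra! h
  exact hsx ((hatom s).2 fun b hb => h b hb.1 hb.2)

theorem rk_sup_eq_add_one (hmono : StrictMono rk)
    (hsemi : ∀ a b : α, rk (a ⊔ b) + rk (a ⊓ b) ≤ rk a + rk b)
    {a x : α} (ha : rk a = 1) (hax : ¬ a ≤ x) : rk (x ⊔ a) = rk x + 1 := by
  have hlt : rk x < rk (x ⊔ a) := hmono (left_lt_sup.2 hax)
  have := hsemi x a
  omega

variable [OrderBot α] [Fintype α]

theorem exists_not_le_sup_eq (hrk0 : rk ⊥ = 0) (hmono : StrictMono rk)
    (hsemi : ∀ a b : α, rk (a ⊔ b) + rk (a ⊓ b) ≤ rk a + rk b)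
    (hatom : ∀ x : α, IsLUB {a | rk a = 1 ∧ a ≤ x} x)
    {a s : α} (ha : rk a = 1) (has : a ≤ s) : ∃ x, ¬ a ≤ x ∧ x ⊔ a = s := by
  have hbot : ¬ a ≤ ⊥ := fun h => by rw [le_bot_iff.1 h, hrk0] at ha; exact zero_ne_one ha
  obtain ⟨x, ⟨hxs, hax⟩, hmax⟩ :=
    Set.Finite.exists_maximal (Set.toFinite {x : α | x ≤ s ∧ ¬ a ≤ x}) ⟨⊥, bot_le, hbot⟩
  refine ⟨x, hax, (sup_le hxs has).antisymm ?_⟩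
  by_contra hsx
  obtain ⟨b, hb, hbs, hbxa⟩ := exists_rk_eq_one_le_not_le hatom hsx
  have hbx : ¬ b ≤ x := fun h => hbxa (h.trans le_sup_left)
  have haxb : a ≤ x ⊔ b := by
    by_contra haxb
    exact hbx (le_sup_right.trans (hmax ⟨sup_le hxs hbs, haxb⟩ le_sup_left))
  have hle : x ⊔ a ≤ x ⊔ b := sup_le le_sup_left haxb
  have hrk : rk (x ⊔ a) = rk (x ⊔ b) := by
    rw [rk_sup_eq_add_one hmono hsemi ha hax, rk_sup_eq_add_one hmono hsemi hb hbx]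
  exact hbxa (le_sup_right.trans (hle.eq_of_not_lt fun hlt => (hmono hlt).ne hrk).ge)

theorem neg_one_pow_rk_mul_pos {R : Type*} [CommRing R] [LinearOrder R] [IsStrictOrderedRing R]
    [DecidableLE α] (hrk0 : rk ⊥ = 0) (hmono : StrictMono rk)
    (hsemi : ∀ a b : α, rk (a ⊔ b) + rk (a ⊓ b) ≤ rk a + rk b)
    (hatom : ∀ x : α, IsLUB {a | rk a = 1 ∧ a ≤ x} x)
    (f : α → R) (hf_bot : f ⊥ = 1) (hf : ∀ y, ⊥ < y → ∑ x with x ≤ y, f x = 0) (s : α) :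
    0 < (-1) ^ rk s * f s := by
  classical
  induction s using WellFoundedLT.induction with
  | _ s ih =>
    rcases eq_bot_or_bot_lt s with rfl | hs
    · simp [hrk0, hf_bot]
    obtain ⟨a, ha, has, -⟩ := exists_rk_eq_one_le_not_le hatom hs.not_ge
    have ha0 : ⊥ < a := bot_lt_iff_ne_bot.2 fun h => by rw [h, hrk0] at ha; exact zero_ne_one ha
    have hweisner := sum_filter_sup_eq_eq_zero f hf ha0 has
    rw [← add_sum_erase _ _ (a := s) (by simp [sup_eq_left.2 has])] at hweisner
    have hP : ∀ x ∈ ({x | x ⊔ a = s} : Finset α).erase s, x < s ∧ rk s = rk x + 1 := by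
      intro x hx
      obtain ⟨hxs, hxa⟩ := by simpa only [mem_erase, mem_filter, mem_univ, true_and] using hx
      have hax : ¬ a ≤ x := fun hax => hxs (by rwa [sup_eq_left.2 hax] at hxa)
      exact ⟨hxa ▸ left_lt_sup.2 hax, hxa ▸ rk_sup_eq_add_one hmono hsemi ha hax⟩
    obtain ⟨x₀, hax₀, hx₀⟩ := exists_not_le_sup_eq hrk0 hmono hsemi hatom ha has
    calc (0 : R) < ∑ x ∈ ({x | x ⊔ a = s} : Finset α).erase s, (-1) ^ rk x * f x :=
          sum_pos (fun x hx => ih x (hP x hx).1)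
            ⟨x₀, by simpa [hx₀] using fun h : x₀ = s => hax₀ (h ▸ has)⟩
      _ = (-1) ^ rk s * f s := by
          rw [eq_neg_of_add_eq_zero_left hweisner, mul_neg, mul_sum, ← sum_neg_distrib]
          refine sum_congr rfl fun x hx => ?_
          rw [(hP x hx).2, pow_succ]
          ring

end GeometricLattice

theorem moebius_alternates_general {α : Type*} [PartialOrder α] (rk : α → ℕ)
    (h : IsGeometricLattice rk) (bot : α) (hbot : IsBot bot)
    (μ : α → α → ℤ)
    (hμ_refl : ∀ s : α, μ s s = 1)
    (hμ_sum : ∀ s t : α, s < t → ∑ᶠ u ∈ Set.Icc s t, μ s u = 0) :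
    ∀ s : α, 0 < (-1 : ℤ) ^ rk s * μ bot s := by
  classical
  obtain ⟨hfin, ⟨bot', hbot', hrk0⟩, -, hcov, hglb, hlub, hatom, hsemi⟩ := h
  obtain rfl : bot = bot' := le_antisymm (hbot bot') (hbot' bot)
  choose inf hinf using hglb
  choose sup hsup using hlub
  let _ : Lattice α := Lattice.ofIsLUBofIsGLB sup inf hsup hinf
  let _ : OrderBot α := { bot := bot, bot_le := hbot }
  have _ : Fintype α := Fintype.ofFinite α
  have hIcc : ∀ t, Set.Icc bot t = ↑({u | u ≤ t} : Finset α) := fun t => by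
    ext u
    simp [hbot u]
  exact neg_one_pow_rk_mul_pos hrk0 (strictMono_of_covBy_imp_rk_eq_add_one hcov)
    (fun a b => hsemi a b _ _ (hinf a b) (hsup a b)) hatom (μ bot) (hμ_refl bot)
    fun t ht => by rw [← finsum_mem_coe_finset, ← hIcc, hμ_sum bot t ht]

/-- In a geometric lattice `L` with bottom element `0̂`, the values of the Möbius
function `μ(0̂, s)` alternate in sign: `(−1)^{rk(s)} μ(0̂, s) > 0` for all `s`.
Here `μ` is any function satisfying the defining recursion of the Möbius function
of the poset: `μ(s, s) = 1` and `Σ_{s ≤ u ≤ t} μ(s, u) = 0` whenever `s < t`. -/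
theorem moebius_alternates {α : Type*} [PartialOrder α] (rk : α → ℕ) (k : ℕ)
    (h : IsGeometricLattice rk) (bot : α) (hbot : IsBot bot)
    (μ : α → α → ℤ)
    (hμ_refl : ∀ s : α, μ s s = 1)
    (hμ_sum : ∀ s t : α, s < t → ∑ᶠ u ∈ Set.Icc s t, μ s u = 0) :
    ∀ s : α, 0 < (-1 : ℤ) ^ rk s * μ bot s :=
  moebius_alternates_general rk h bot hbot μ hμ_refl hμ_sum
end
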